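/- arXiv:2110.01234 — 4 statements merged into one kernel-verified Lean document; each statement's English description precedes it below -/
import Mathlib

section
/- For R > 0, μ > 0, n ≥ 2, and every X ∈ [0,∞)², the trace of the Hessian matrix D²Φ_n(X), namely ∂₁²Φ_n(X) + ∂₂²Φ_n(X), is non-negative. -/
open Matrix Finset

/-- `α_{k,n} = R (k + μ (n - k - 1))`. -/
noncomputable def alph (R mu : ℝ) (n k : ℕ) : ℝ := R * ((k : ℝ) + mu * ((n : ℝ) - (k : ℝ) - 1))

/-- `a_{j,n}`. -/
noncomputable def coefa (R mu : ℝ) (n j : ℕ) : ℝ :=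
  (n.choose j : ℝ) * ∏ k ∈ Finset.range j, ((k : ℝ) + alph R mu n k) / alph R mu n k

/-- `Φ_n(X) = Σ_{j=0}^n a_{j,n} X₁^j X₂^{n-j}`. -/
noncomputable def Phi (R mu : ℝ) (n : ℕ) (X : ℝ × ℝ) : ℝ :=
  ∑ j ∈ Finset.range (n + 1), coefa R mu n j * X.1 ^ j * X.2 ^ (n - j)

/-- first partial derivative of `Φ_n` in the first variable. -/
noncomputable def d1Phi (R mu : ℝ) (n : ℕ) (X : ℝ × ℝ) : ℝ :=
  deriv (fun t => Phi R mu n (t, X.2)) X.1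

/-- first partial derivative of `Φ_n` in the second variable. -/
noncomputable def d2Phi (R mu : ℝ) (n : ℕ) (X : ℝ × ℝ) : ℝ :=
  deriv (fun t => Phi R mu n (X.1, t)) X.2

/-- `∂₁²Φ_n`. -/
noncomputable def d11Phi (R mu : ℝ) (n : ℕ) (X : ℝ × ℝ) : ℝ :=
  deriv (fun t => d1Phi R mu n (t, X.2)) X.1

/-- `∂₁∂₂Φ_n`. -/
noncomputable def d12Phi (R mu : ℝ) (n : ℕ) (X : ℝ × ℝ) : ℝ :=
  deriv (fun t => d2Phi R mu n (t, X.2)) X.1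

/-- `∂₂²Φ_n`. -/
noncomputable def d22Phi (R mu : ℝ) (n : ℕ) (X : ℝ × ℝ) : ℝ :=
  deriv (fun t => d2Phi R mu n (X.1, t)) X.2

/-- The Hessian matrix `D²Φ_n(X)`. -/
noncomputable def hessPhi (R mu : ℝ) (n : ℕ) (X : ℝ × ℝ) : Matrix (Fin 2) (Fin 2) ℝ :=
  !![d11Phi R mu n X, d12Phi R mu n X; d12Phi R mu n X, d22Phi R mu n X]

/-- The mobility matrix `M(X)`. -/
noncomputable def mobM (R mu : ℝ) (X : ℝ × ℝ) : Matrix (Fin 2) (Fin 2) ℝ :=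
  !![(1 + R) * X.1, R * X.1; mu * R * X.2, mu * R * X.2]

/-- The quantity `A_{j,k}`. -/
noncomputable def Acoef (R mu : ℝ) (n j k : ℕ) : ℝ :=
  ((j : ℝ) + 2) * ((n : ℝ) - (k : ℝ)) * coefa R mu n (j + 2) * coefa R mu n k
    - ((n : ℝ) - (j : ℝ) - 1) * ((k : ℝ) + 1) * coefa R mu n (j + 1) * coefa R mu n (k + 1)

/-- `ν_n`. -/
noncomputable def nuc (R mu : ℝ) (n : ℕ) : ℝ :=
  Real.exp (((n : ℝ) - 1) * ((1 + R * max 1 mu) * Real.log (1 + 1 / (R * max 1 mu)) - 1)) - 1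

/-
Each `∂ᵢ²Φ_n` is the second derivative of a one-variable polynomial whose coefficients
`a_{j,n} X₂^{n-j}` (resp. `a_{j,n} X₁^j`) are non-negative, since every factor
`(k + α_{k,n}) / α_{k,n}` with `k < n` is. Differentiation preserves non-negativity of the
coefficients, and such a polynomial is non-negative on `[0, ∞)`.
-/

namespace Polynomial

variable {S : Type*} [CommSemiring S] [PartialOrder S] [IsOrderedRing S]

lemma eval_nonneg_of_coeff_nonneg {p : S[X]} (hp : ∀ i, 0 ≤ p.coeff i) {x : S} (hx : 0 ≤ x) :
    0 ≤ p.eval x := by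
  rw [eval_eq_sum_range]
  exact sum_nonneg fun i _ => mul_nonneg (hp i) (pow_nonneg hx i)

lemma coeff_derivative_nonneg {p : S[X]} (hp : ∀ i, 0 ≤ p.coeff i) (i : ℕ) :
    0 ≤ p.derivative.coeff i := by
  rw [coeff_derivative]
  exact mul_nonneg (hp _) (by exact_mod_cast (i + 1).cast_nonneg)

lemma coeff_sum_C_mul_X_pow_nonneg {ι : Type*} {s : Finset ι} {c : ι → S} {e : ι → ℕ}
    (hc : ∀ j ∈ s, 0 ≤ c j) (i : ℕ) : 0 ≤ (∑ j ∈ s, C (c j) * X ^ e j).coeff i := by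
  rw [finsetSum_coeff]
  refine sum_nonneg fun j hj => ?_
  rw [coeff_C_mul_X_pow]
  split_ifs
  exacts [hc j hj, le_rfl]

end Polynomial

lemma deriv_deriv_eval_nonneg {p : Polynomial ℝ} (hp : ∀ i, 0 ≤ p.coeff i) {x : ℝ} (hx : 0 ≤ x) :
    0 ≤ deriv (deriv fun t => p.eval t) x := by
  have hderiv : (deriv fun t => p.eval t) = fun t => p.derivative.eval t :=
    funext fun _ => p.deriv
  rw [hderiv, Polynomial.deriv]
  exact Polynomial.eval_nonneg_of_coeff_nonneg
    (Polynomial.coeff_derivative_nonneg (Polynomial.coeff_derivative_nonneg hp)) hx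

open Polynomial

lemma alph_nonneg {R mu : ℝ} (hR : 0 ≤ R) (hmu : 0 ≤ mu) {n k : ℕ} (hk : k < n) :
    0 ≤ alph R mu n k := by
  have hkn : (k : ℝ) + 1 ≤ n := by exact_mod_cast hk
  unfold alph
  have : 0 ≤ mu * ((n : ℝ) - k - 1) := mul_nonneg hmu (by linarith)
  positivity

lemma coefa_nonneg {R mu : ℝ} (hR : 0 ≤ R) (hmu : 0 ≤ mu) {n j : ℕ} (hj : j ≤ n) :
    0 ≤ coefa R mu n j := by
  refine mul_nonneg (Nat.cast_nonneg _) (prod_nonneg fun k hk => ?_)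
  have hα := alph_nonneg hR hmu (lt_of_lt_of_le (mem_range.1 hk) hj)
  exact div_nonneg (add_nonneg (Nat.cast_nonneg _) hα) hα

lemma Phi_fst_eq_eval (R mu : ℝ) (n : ℕ) (y : ℝ) :
    (fun t => Phi R mu n (t, y)) =
      fun t => (∑ j ∈ range (n + 1), C (coefa R mu n j * y ^ (n - j)) * X ^ j).eval t := by
  funext t
  simp only [Phi, eval_finsetSum, eval_mul, eval_C, eval_pow, eval_X]
  exact sum_congr rfl fun j _ => by ring

lemma Phi_snd_eq_eval (R mu : ℝ) (n : ℕ) (x : ℝ) :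
    (fun t => Phi R mu n (x, t)) =
      fun t => (∑ j ∈ range (n + 1), C (coefa R mu n j * x ^ j) * X ^ (n - j)).eval t := by
  funext t
  simp only [Phi, eval_finsetSum, eval_mul, eval_C, eval_pow, eval_X]

theorem stmt3_general (R mu : ℝ) (hR : 0 < R) (hmu : 0 < mu) (n : ℕ)
    (X : ℝ × ℝ) (hX1 : 0 ≤ X.1) (hX2 : 0 ≤ X.2) :
    0 ≤ d11Phi R mu n X + d22Phi R mu n X := by
  have hc : ∀ j ∈ range (n + 1), 0 ≤ coefa R mu n j := fun j hj =>
    coefa_nonneg hR.le hmu.le (Nat.lt_succ_iff.1 (mem_range.1 hj))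
  have h11 : 0 ≤ d11Phi R mu n X := by
    change 0 ≤ deriv (deriv fun t => Phi R mu n (t, X.2)) X.1
    rw [Phi_fst_eq_eval]
    exact deriv_deriv_eval_nonneg
      (coeff_sum_C_mul_X_pow_nonneg fun j hj => mul_nonneg (hc j hj) (pow_nonneg hX2 _)) hX1
  have h22 : 0 ≤ d22Phi R mu n X := by
    change 0 ≤ deriv (deriv fun t => Phi R mu n (X.1, t)) X.2
    rw [Phi_snd_eq_eval]
    exact deriv_deriv_eval_nonneg
      (coeff_sum_C_mul_X_pow_nonneg fun j hj => mul_nonneg (hc j hj) (pow_nonneg hX1 _)) hX2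
  exact add_nonneg h11 h22

theorem stmt3 (R mu : ℝ) (hR : 0 < R) (hmu : 0 < mu) (n : ℕ) (hn : 2 ≤ n)
    (X : ℝ × ℝ) (hX1 : 0 ≤ X.1) (hX2 : 0 ≤ X.2) :
    0 ≤ d11Phi R mu n X + d22Phi R mu n X :=
  stmt3_general R mu hR hmu n X hX1 hX2
end

section
/- For R > 0, μ > 0, n ≥ 3, define A_{j,k} := (j+2)(n-k) a_{j+2,n} a_{k,n} − (n-j-1)(k+1) a_{j+1,n} a_{k+1,n} for 0 ≤ j,k ≤ n-2. Then A_{j,k} = μR(n-1) · (n-j-1)(n-k)(j+1-k) / (α_{j+1,n} α_{k,n}) · a_{j+1,n} a_{k,n}. -/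
open Matrix Finset

/-!
The product defining `a_{j,n}` telescopes into the recursion
`(m + 1) α_m a_{m+1} = (n - m) (m + α_m) a_m`. Eliminating `a_{j+2}` and `a_{k+1}` with it turns
`A_{j,k} α_{j+1} α_k` into `(n - j - 1) (n - k) a_{j+1} a_k ((j + 1) α_k - k α_{j+1})`, and since
`α_{i,n}` is affine in `i`, the last factor is `μ R (n - 1) (j + 1 - k)`.
-/

lemma Nat.cast_choose_succ_mul {S : Type*} [Ring S] (n m : ℕ) :
    (n.choose (m + 1) : S) * (m + 1) = n.choose m * (n - m) := by
  rcases le_or_gt m n with hmn | hnm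
  · have h := congrArg (Nat.cast : ℕ → S) (Nat.choose_succ_right_eq n m)
    push_cast [Nat.cast_sub hmn] at h
    exact h
  · simp [Nat.choose_eq_zero_of_lt hnm, Nat.choose_eq_zero_of_lt (hnm.trans m.lt_succ_self)]

lemma alph_pos {R mu : ℝ} (hR : 0 < R) (hmu : 0 < mu) {n k : ℕ} (hn : 2 ≤ n) (hk : k < n) :
    0 < alph R mu n k := by
  have hkn : (k : ℝ) + 1 ≤ n := by exact_mod_cast hk
  have hn' : (2 : ℝ) ≤ n := by exact_mod_cast hn
  refine mul_pos hR ?_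
  rcases Nat.eq_zero_or_pos k with rfl | hk0
  · simp only [Nat.cast_zero, zero_add, sub_zero]
    exact mul_pos hmu (by linarith)
  · have hk1 : (1 : ℝ) ≤ k := by exact_mod_cast hk0
    nlinarith

lemma coefa_succ_mul {R mu : ℝ} {n : ℕ} (m : ℕ) (hα : alph R mu n m ≠ 0) :
    coefa R mu n (m + 1) * (m + 1) * alph R mu n m
      = coefa R mu n m * (n - m) * (m + alph R mu n m) := by
  unfold coefa
  rw [prod_range_succ]
  field_simp
  linear_combination (∏ k ∈ range m, ((k : ℝ) + alph R mu n k) / alph R mu n k)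
    * (m + alph R mu n m) * Nat.cast_choose_succ_mul (S := ℝ) n m

lemma mul_alph_sub_mul_alph (R mu : ℝ) (n i k : ℕ) :
    (i : ℝ) * alph R mu n k - k * alph R mu n i = mu * R * ((n : ℝ) - 1) * ((i : ℝ) - k) := by
  unfold alph
  ring

lemma Acoef_mul_alph {R mu : ℝ} {n j k : ℕ} (hαj : alph R mu n (j + 1) ≠ 0)
    (hαk : alph R mu n k ≠ 0) :
    Acoef R mu n j k * (alph R mu n (j + 1) * alph R mu n k)
      = mu * R * ((n : ℝ) - 1)
          * (((n : ℝ) - (j : ℝ) - 1) * ((n : ℝ) - (k : ℝ)) * ((j : ℝ) + 1 - (k : ℝ)))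
          * coefa R mu n (j + 1) * coefa R mu n k := by
  have hj := coefa_succ_mul (j + 1) hαj
  have hk := coefa_succ_mul k hαk
  have hcross := mul_alph_sub_mul_alph R mu n (j + 1) k
  push_cast at hj hk hcross
  unfold Acoef
  linear_combination ((n - k) * coefa R mu n k * alph R mu n k) * hj
    - ((n - j - 1) * coefa R mu n (j + 1) * alph R mu n (j + 1)) * hk
    + ((n - j - 1) * (n - k) * coefa R mu n (j + 1) * coefa R mu n k) * hcross

theorem stmt4 (R mu : ℝ) (hR : 0 < R) (hmu : 0 < mu) (n : ℕ) (hn : 3 ≤ n)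
    (j k : ℕ) (hj : j ≤ n - 2) (hk : k ≤ n - 2) :
    Acoef R mu n j k
      = mu * R * ((n : ℝ) - 1)
          * (((n : ℝ) - (j : ℝ) - 1) * ((n : ℝ) - (k : ℝ)) * ((j : ℝ) + 1 - (k : ℝ)))
          / (alph R mu n (j + 1) * alph R mu n k)
          * coefa R mu n (j + 1) * coefa R mu n k := by
  have hαj := (alph_pos hR hmu (by omega) (by omega : j + 1 < n)).ne'
  have hαk := (alph_pos hR hmu (by omega) (by omega : k < n)).ne'
  rw [div_mul_eq_mul_div, div_mul_eq_mul_div, eq_div_iff (mul_ne_zero hαj hαk)]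
  exact Acoef_mul_alph hαj hαk
end

section
/- For R > 0, μ > 0 and n ≥ 2, the polynomial Φ_n is convex on the quadrant [0,∞)², i.e. for all X, Y ∈ [0,∞)² and t ∈ [0,1], Φ_n(tX + (1-t)Y) ≤ t Φ_n(X) + (1-t) Φ_n(Y). -/
open Matrix Finset

/-!
Write `a_{j,n} = C(n,j) c_j` with `c_j = ∏_{k<j} ρ_k` and `ρ_k = (k + α_{k,n}) / α_{k,n}`.
Along a line `s ↦ Y + s V`, the form `Σ_j C(n,j) c_j x^j y^{n-j}` differentiates like
`(T x + y)^n` with `T^j` read as `c_j`, so its second derivative is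
`n (n-1) Σ_i C(n-2,i) x^i y^{n-2-i} (c_{i+2} V₁² + 2 c_{i+1} V₁ V₂ + c_i V₂²)`.
On the quadrant each term is nonnegative once `c ≥ 0` is log-convex, `c_{i+1}² ≤ c_i c_{i+2}`, and
that holds because `ρ_k = 1 + k / α_{k,n}` is nondecreasing in `k`.
-/

noncomputable def binomialForm (n : ℕ) (c : ℕ → ℝ) (X : ℝ × ℝ) : ℝ :=
  ∑ j ∈ range (n + 1), (n.choose j : ℝ) * c j * X.1 ^ j * X.2 ^ (n - j)

theorem hasDerivAt_binomialForm_line (n : ℕ) (c : ℕ → ℝ) (X V : ℝ × ℝ) (s : ℝ) :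
    HasDerivAt (fun t => binomialForm n c (X + t • V))
      (n * (V.1 * binomialForm (n - 1) (fun i => c (i + 1)) (X + s • V)
        + V.2 * binomialForm (n - 1) c (X + s • V))) s := by
  have hp : HasDerivAt (fun t : ℝ => X.1 + t * V.1) V.1 s := by
    simpa using ((hasDerivAt_id s).mul_const V.1).const_add X.1
  have hq : HasDerivAt (fun t : ℝ => X.2 + t * V.2) V.2 s := by
    simpa using ((hasDerivAt_id s).mul_const V.2).const_add X.2
  simp only [binomialForm, Prod.fst_add, Prod.snd_add, Prod.smul_fst, Prod.smul_snd, smul_eq_mul]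
  cases n with
  | zero => simpa using hasDerivAt_const s (c 0)
  | succ m =>
    refine (HasDerivAt.fun_sum fun j _ => ((hp.fun_pow j).const_mul ((m + 1).choose j * c j)).mul
      (hq.fun_pow (m + 1 - j))).congr_deriv ?_
    set p := X.1 + s * V.1
    set q := X.2 + s * V.2
    have hshift₁ : ∑ j ∈ range (m + 2),
          (m + 1).choose j * c j * (j * p ^ (j - 1) * V.1) * q ^ (m + 1 - j)
        = (m + 1) * V.1 * ∑ i ∈ range (m + 1), m.choose i * c (i + 1) * p ^ i * q ^ (m - i) := by
      rw [sum_range_succ', mul_sum]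
      simp only [Nat.cast_zero, zero_mul, mul_zero, add_zero, Nat.add_sub_cancel,
        Nat.add_sub_add_right]
      refine sum_congr rfl fun i _ => ?_
      have h := congrArg (Nat.cast : ℕ → ℝ) (Nat.add_one_mul_choose_eq m i)
      push_cast at h ⊢
      linear_combination (-(c (i + 1) * p ^ i * q ^ (m - i) * V.1)) * h
    have hshift₂ : ∑ j ∈ range (m + 2),
          (m + 1).choose j * c j * p ^ j * (((m + 1 - j : ℕ) : ℝ) * q ^ (m + 1 - j - 1) * V.2)
        = (m + 1) * V.2 * ∑ i ∈ range (m + 1), m.choose i * c i * p ^ i * q ^ (m - i) := by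
      rw [sum_range_succ, mul_sum]
      simp only [Nat.sub_self, Nat.cast_zero, zero_mul, mul_zero, add_zero]
      refine sum_congr rfl fun i _ => ?_
      have h := congrArg (Nat.cast : ℕ → ℝ) (Nat.choose_mul_succ_eq m i)
      rw [show m + 1 - i - 1 = m - i by omega]
      push_cast at h
      linear_combination (-(c i * p ^ i * q ^ (m - i) * V.2)) * h
    rw [sum_add_distrib, hshift₁, hshift₂]
    push_cast
    ring

theorem quadratic_nonneg_of_sq_le {a b c : ℝ} (ha : 0 ≤ a) (hc : 0 ≤ c) (hb : b ^ 2 ≤ a * c)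
    (x y : ℝ) : 0 ≤ a * x ^ 2 + 2 * b * x * y + c * y ^ 2 := by
  rcases ha.eq_or_lt with rfl | ha
  · have hb0 : b = 0 := by nlinarith
    subst hb0
    nlinarith
  · nlinarith [sq_nonneg (a * x + b * y), mul_nonneg (sub_nonneg.2 hb) (sq_nonneg y)]

theorem binomialForm_quadratic_nonneg {m : ℕ} {c : ℕ → ℝ} (hc : ∀ i ≤ m + 2, 0 ≤ c i)
    (hlc : ∀ i ≤ m, c (i + 1) ^ 2 ≤ c i * c (i + 2)) {X : ℝ × ℝ} (hX : 0 ≤ X) (B D : ℝ) :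
    0 ≤ B * (B * binomialForm m (fun i => c (i + 1 + 1)) X
        + D * binomialForm m (fun i => c (i + 1)) X)
      + D * (B * binomialForm m (fun i => c (i + 1)) X + D * binomialForm m c X) := by
  have hterm : ∀ i ∈ range (m + 1),
      0 ≤ (m.choose i : ℝ) * X.1 ^ i * X.2 ^ (m - i) *
        (c (i + 2) * B ^ 2 + 2 * c (i + 1) * B * D + c i * D ^ 2) := by
    intro i hi
    have hi : i ≤ m := Nat.lt_succ_iff.1 (mem_range.1 hi)
    have h₁ : 0 ≤ X.1 := hX.1
    have h₂ : 0 ≤ X.2 := hX.2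
    exact mul_nonneg (by positivity) (quadratic_nonneg_of_sq_le (hc (i + 2) (by omega))
      (hc i (by omega)) ((hlc i hi).trans_eq (mul_comm _ _)) B D)
  refine (sum_nonneg hterm).trans_eq ?_
  simp only [binomialForm, mul_sum, ← sum_add_distrib]
  refine sum_congr rfl fun i _ => ?_
  ring

theorem convexOn_of_forall_convexOn_segment {E : Type*} [AddCommGroup E] [Module ℝ E]
    {s : Set E} (hs : Convex ℝ s) {f : E → ℝ}
    (h : ∀ x ∈ s, ∀ y ∈ s, ConvexOn ℝ (Set.Icc 0 1) fun t : ℝ => f (y + t • (x - y))) :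
    ConvexOn ℝ s f := by
  refine ⟨hs, fun x hx y hy a b ha hb hab => ?_⟩
  have key := (h x hx y hy).2 (Set.right_mem_Icc.2 zero_le_one) (Set.left_mem_Icc.2 zero_le_one)
    ha hb hab
  have hseg : y + a • (x - y) = a • x + b • y := by
    rw [eq_sub_of_add_eq' hab, smul_sub, sub_smul, one_smul]; abel
  simpa [hseg] using key

theorem convexOn_binomialForm {n : ℕ} {c : ℕ → ℝ} (hc : ∀ i ≤ n, 0 ≤ c i)
    (hlc : ∀ i, i + 2 ≤ n → c (i + 1) ^ 2 ≤ c i * c (i + 2)) :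
    ConvexOn ℝ (Set.Ici 0) (binomialForm n c) := by
  refine convexOn_of_forall_convexOn_segment (convex_Ici 0) fun X hX Y hY => ?_
  set V := X - Y
  have hf' (s : ℝ) := hasDerivAt_binomialForm_line n c Y V s
  have hf'' (s : ℝ) := (((hasDerivAt_binomialForm_line (n - 1) (fun i => c (i + 1)) Y V s).const_mul
    V.1).add ((hasDerivAt_binomialForm_line (n - 1) c Y V s).const_mul V.2)).const_mul (n : ℝ)
  refine convexOn_of_hasDerivWithinAt2_nonneg (convex_Icc 0 1)
    (fun s _ => (hf' s).continuousAt.continuousWithinAt) (fun s _ => (hf' s).hasDerivWithinAt)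
    (fun s _ => (hf'' s).hasDerivWithinAt) fun s hs => ?_
  rw [interior_Icc] at hs
  have hmem : Y + s • V ∈ Set.Ici 0 :=
    (convex_Ici 0).add_smul_sub_mem hY hX (Set.Ioo_subset_Icc_self hs)
  rcases n with _ | _ | m
  · simp
  · simp
  · have hquad := binomialForm_quadratic_nonneg hc (fun i hi => hlc i (by omega)) hmem V.1 V.2
    simp only [Nat.add_sub_cancel]
    push_cast
    have hfac : (0 : ℝ) ≤ (m + 1 + 1) * (m + 1) := by positivity
    exact (mul_nonneg hfac hquad).trans_eq (by ring)

theorem sq_prod_range_succ_le (ρ : ℕ → ℝ) {i : ℕ} (h₀ : 0 ≤ ρ i) (hle : ρ i ≤ ρ (i + 1)) :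
    (∏ k ∈ range (i + 1), ρ k) ^ 2 ≤ (∏ k ∈ range i, ρ k) * ∏ k ∈ range (i + 2), ρ k := by
  simp only [prod_range_succ]
  set P := ∏ k ∈ range i, ρ k
  calc (P * ρ i) ^ 2 = P ^ 2 * ρ i * ρ i := by ring
    _ ≤ P ^ 2 * ρ i * ρ (i + 1) := by gcongr
    _ = P * (P * ρ i * ρ (i + 1)) := by ring

noncomputable def phiRatio (R mu : ℝ) (n k : ℕ) : ℝ := ((k : ℝ) + alph R mu n k) / alph R mu n k

noncomputable def phiWeight (R mu : ℝ) (n j : ℕ) : ℝ := ∏ k ∈ range j, phiRatio R mu n k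

theorem Phi_eq_binomialForm (R mu : ℝ) (n : ℕ) : Phi R mu n = binomialForm n (phiWeight R mu n) :=
  rfl

section
variable {R mu : ℝ} {n : ℕ}

theorem phiRatio_nonneg (hR : 0 ≤ R) (hmu : 0 ≤ mu) {k : ℕ} (hk : k < n) :
    0 ≤ phiRatio R mu n k := by
  have hkn : (k : ℝ) + 1 ≤ n := by exact_mod_cast hk
  have hα : 0 ≤ alph R mu n k := by
    have := mul_nonneg hmu (by linarith : (0 : ℝ) ≤ n - k - 1)
    unfold alph
    positivity
  unfold phiRatio
  positivity

theorem phiRatio_le_succ (hR : 0 < R) (hmu : 0 < mu) {k : ℕ} (hk : k + 2 ≤ n) :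
    phiRatio R mu n k ≤ phiRatio R mu n (k + 1) := by
  have hkn : (k : ℝ) + 2 ≤ n := by exact_mod_cast hk
  have hα₀ : 0 < alph R mu n k := by
    have := mul_pos hmu (by linarith : (0 : ℝ) < n - k - 1)
    unfold alph
    positivity
  have hα₁ : 0 < alph R mu n (k + 1) := by
    have := mul_nonneg hmu.le (by push_cast; linarith : (0 : ℝ) ≤ n - (k + 1 : ℕ) - 1)
    unfold alph
    positivity
  have hcross : (k + 1) * alph R mu n k - k * alph R mu n (k + 1) = R * mu * (n - 1) := by
    unfold alph
    push_cast
    ring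
  have hRmu : 0 ≤ R * mu * (n - 1) := mul_nonneg (mul_pos hR hmu).le (by linarith)
  unfold phiRatio
  rw [div_le_div_iff₀ hα₀ hα₁]
  push_cast
  linarith

theorem phiWeight_nonneg (hR : 0 ≤ R) (hmu : 0 ≤ mu) {j : ℕ} (hj : j ≤ n) :
    0 ≤ phiWeight R mu n j :=
  prod_nonneg fun _ hk => phiRatio_nonneg hR hmu ((mem_range.1 hk).trans_le hj)

theorem phiWeight_sq_le (hR : 0 < R) (hmu : 0 < mu) {i : ℕ} (hi : i + 2 ≤ n) :
    phiWeight R mu n (i + 1) ^ 2 ≤ phiWeight R mu n i * phiWeight R mu n (i + 2) :=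
  sq_prod_range_succ_le _ (phiRatio_nonneg hR.le hmu.le (by omega)) (phiRatio_le_succ hR hmu hi)

end

theorem stmt7_general (R mu : ℝ) (hR : 0 < R) (hmu : 0 < mu) (n : ℕ)
    (X Y : ℝ × ℝ) (hX1 : 0 ≤ X.1) (hX2 : 0 ≤ X.2) (hY1 : 0 ≤ Y.1) (hY2 : 0 ≤ Y.2)
    (t : ℝ) (ht0 : 0 ≤ t) (ht1 : t ≤ 1) :
    Phi R mu n (t • X + (1 - t) • Y) ≤ t * Phi R mu n X + (1 - t) * Phi R mu n Y := by
  have hconv : ConvexOn ℝ (Set.Ici 0) (Phi R mu n) := by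
    rw [Phi_eq_binomialForm]
    exact convexOn_binomialForm (fun _ => phiWeight_nonneg hR.le hmu.le)
      fun _ => phiWeight_sq_le hR hmu
  exact hconv.2 (Prod.mk_le_mk.2 ⟨hX1, hX2⟩) (Prod.mk_le_mk.2 ⟨hY1, hY2⟩) ht0 (sub_nonneg.2 ht1)
    (add_sub_cancel t 1)

theorem stmt7 (R mu : ℝ) (hR : 0 < R) (hmu : 0 < mu) (n : ℕ) (hn : 2 ≤ n)
    (X Y : ℝ × ℝ) (hX1 : 0 ≤ X.1) (hX2 : 0 ≤ X.2) (hY1 : 0 ≤ Y.1) (hY2 : 0 ≤ Y.2)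
    (t : ℝ) (ht0 : 0 ≤ t) (ht1 : t ≤ 1) :
    Phi R mu n (t • X + (1 - t) • Y) ≤ t * Phi R mu n X + (1 - t) * Phi R mu n Y :=
  stmt7_general R mu hR hmu n X Y hX1 hX2 hY1 hY2 t ht0 ht1
end

section
/- For R > 0, μ > 0, n ≥ 2, and every X ∈ ℝ², the 2×2 matrix S_n(X) := D²Φ_n(X) M(X), where M(X) is the matrix with rows ((1+R)X₁, R X₁) and (μR X₂, μR X₂), is symmetric, i.e. [S_n(X)]₁₂ = [S_n(X)]₂₁. -/
open Matrix Finset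

/-!
Write `Φ_n` as a binary form of degree `n` with coefficients `a_j`. Its first partials are
binary forms of degree `n - 1` with coefficients `u_j = (j+1) a_{j+1}` and `v_j = (n-j) a_j`,
and the Euler operators `x ∂ₓ`, `y ∂_y` act on a form of degree `d` by multiplying the `j`-th
coefficient by `j`, resp. `d - j`. Using `∂ₓ∂_y Φ = ∂_y∂ₓ Φ`, the symmetry of `D²Φ_n M` reads
`R (x ∂ₓ + μ y ∂_y) Φ₁ = ((1+R) x ∂ₓ + μR y ∂_y) Φ₂`, which coefficientwise is the recursion
`(j+1) α_j a_{j+1} = (n-j) (j + α_j) a_j` defining the `a_j`.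
-/

noncomputable def binaryForm (c : ℕ → ℝ) (d : ℕ) (x y : ℝ) : ℝ :=
  ∑ j ∈ range (d + 1), c j * x ^ j * y ^ (d - j)

section binaryForm

variable (c : ℕ → ℝ) (d : ℕ) (x y : ℝ)

lemma binaryForm_congr {c' : ℕ → ℝ} (h : ∀ j ≤ d, c j = c' j) :
    binaryForm c d x y = binaryForm c' d x y :=
  sum_congr rfl fun j hj => by rw [h j (Nat.lt_succ_iff.mp (mem_range.mp hj))]

lemma binaryForm_add (c' : ℕ → ℝ) :
    binaryForm (fun j => c j + c' j) d x y = binaryForm c d x y + binaryForm c' d x y := by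
  simp only [binaryForm, add_mul, sum_add_distrib]

lemma binaryForm_const_mul (a : ℝ) :
    binaryForm (fun j => a * c j) d x y = a * binaryForm c d x y := by
  simp only [binaryForm, mul_sum, mul_assoc]

lemma hasDerivAt_binaryForm_fst :
    HasDerivAt (fun t => binaryForm c d t y)
      (∑ j ∈ range (d + 1), c j * (j * x ^ (j - 1)) * y ^ (d - j)) x :=
  HasDerivAt.fun_sum fun j _ => ((hasDerivAt_pow j x).const_mul (c j)).mul_const (y ^ (d - j))

lemma hasDerivAt_binaryForm_snd :
    HasDerivAt (fun t => binaryForm c d x t)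
      (∑ j ∈ range (d + 1), c j * x ^ j * ((d - j : ℕ) * y ^ (d - j - 1))) y :=
  HasDerivAt.fun_sum fun j _ => (hasDerivAt_pow (d - j) y).const_mul (c j * x ^ j)

lemma deriv_binaryForm_fst_succ :
    deriv (fun t => binaryForm c (d + 1) t y) x =
      binaryForm (fun j => (j + 1) * c (j + 1)) d x y := by
  rw [(hasDerivAt_binaryForm_fst c (d + 1) x y).deriv, sum_range_succ']
  simp only [Nat.cast_zero, zero_mul, mul_zero, add_zero, Nat.add_sub_cancel,
    Nat.add_sub_add_right, Nat.cast_succ, binaryForm]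
  exact sum_congr rfl fun j _ => by ring

lemma deriv_binaryForm_snd_succ :
    deriv (fun t => binaryForm c (d + 1) x t) y =
      binaryForm (fun j => ((d : ℝ) + 1 - j) * c j) d x y := by
  rw [(hasDerivAt_binaryForm_snd c (d + 1) x y).deriv, sum_range_succ]
  simp only [Nat.sub_self, Nat.cast_zero, zero_mul, mul_zero, add_zero, binaryForm]
  refine sum_congr rfl fun j hj => ?_
  have hj : j ≤ d := Nat.lt_succ_iff.mp (mem_range.mp hj)
  rw [Nat.cast_sub (by omega), show d + 1 - j - 1 = d - j by omega]
  push_cast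
  ring

lemma mul_deriv_binaryForm_fst :
    x * deriv (fun t => binaryForm c d t y) x = binaryForm (fun j => j * c j) d x y := by
  rw [(hasDerivAt_binaryForm_fst c d x y).deriv, mul_sum]
  refine sum_congr rfl fun j _ => ?_
  cases j with
  | zero => simp
  | succ j => rw [Nat.add_sub_cancel, pow_succ]; ring

lemma mul_deriv_binaryForm_snd :
    y * deriv (fun t => binaryForm c d x t) y =
      binaryForm (fun j => ((d : ℝ) - j) * c j) d x y := by
  rw [(hasDerivAt_binaryForm_snd c d x y).deriv, mul_sum]
  refine sum_congr rfl fun j hj => ?_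
  dsimp only
  rw [← Nat.cast_sub (Nat.lt_succ_iff.mp (mem_range.mp hj))]
  cases d - j with
  | zero => simp
  | succ m => rw [Nat.add_sub_cancel, pow_succ]; ring

lemma deriv_deriv_binaryForm_comm :
    deriv (fun s => deriv (fun t => binaryForm c d s t) y) x =
      deriv (fun t => deriv (fun s => binaryForm c d s t) x) y := by
  cases d with
  | zero => simp [binaryForm]
  | succ d =>
    simp only [deriv_binaryForm_fst_succ, deriv_binaryForm_snd_succ]
    cases d with
    | zero => simp [binaryForm]
    | succ d =>
      simp only [deriv_binaryForm_fst_succ, deriv_binaryForm_snd_succ]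
      congr 1
      funext j
      push_cast
      ring

end binaryForm

lemma succ_mul_coefa_succ (R mu : ℝ) (n k : ℕ) :
    ((k : ℝ) + 1) * coefa R mu n (k + 1) =
      ((n - k : ℕ) : ℝ) * coefa R mu n k * ((k + alph R mu n k) / alph R mu n k) := by
  have hchoose : (n.choose (k + 1) : ℝ) * ((k : ℝ) + 1) = n.choose k * ((n - k : ℕ) : ℝ) := by
    exact_mod_cast Nat.choose_succ_right_eq n k
  simp only [coefa, prod_range_succ]
  linear_combination (∏ i ∈ range k, ((i : ℝ) + alph R mu n i) / alph R mu n i) *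
    ((k + alph R mu n k) / alph R mu n k) * hchoose

lemma coefa_recursion {R mu : ℝ} (hR : 0 < R) (hmu : 0 < mu) {n k : ℕ} (hn : 2 ≤ n)
    (hk : k < n) :
    ((k : ℝ) + 1) * alph R mu n k * coefa R mu n (k + 1) =
      ((n : ℝ) - k) * (k + alph R mu n k) * coefa R mu n k := by
  have hα := (alph_pos hR hmu hn hk).ne'
  rw [mul_right_comm, succ_mul_coefa_succ, Nat.cast_sub hk.le]
  field_simp

section derivatives

variable (R mu : ℝ) (d : ℕ) (X : ℝ × ℝ)

lemma d1Phi_eq :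
    d1Phi R mu (d + 1) X = binaryForm (fun j => (j + 1) * coefa R mu (d + 1) (j + 1)) d X.1 X.2 :=
  deriv_binaryForm_fst_succ _ _ _ _

lemma d2Phi_eq :
    d2Phi R mu (d + 1) X =
      binaryForm (fun j => ((d : ℝ) + 1 - j) * coefa R mu (d + 1) j) d X.1 X.2 :=
  deriv_binaryForm_snd_succ _ _ _ _

lemma fst_mul_d11Phi :
    X.1 * d11Phi R mu (d + 1) X =
      binaryForm (fun j => j * ((j + 1) * coefa R mu (d + 1) (j + 1))) d X.1 X.2 := by
  simp only [d11Phi, d1Phi_eq]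
  exact mul_deriv_binaryForm_fst _ _ _ _

lemma snd_mul_d12Phi :
    X.2 * d12Phi R mu (d + 1) X =
      binaryForm (fun j => ((d : ℝ) - j) * ((j + 1) * coefa R mu (d + 1) (j + 1))) d X.1 X.2 := by
  rw [← mul_deriv_binaryForm_snd]
  congr 1
  refine (deriv_deriv_binaryForm_comm (coefa R mu (d + 1)) (d + 1) X.1 X.2).trans ?_
  simp only [deriv_binaryForm_fst_succ]

lemma fst_mul_d12Phi :
    X.1 * d12Phi R mu (d + 1) X =
      binaryForm (fun j => j * (((d : ℝ) + 1 - j) * coefa R mu (d + 1) j)) d X.1 X.2 := by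
  simp only [d12Phi, d2Phi_eq]
  exact mul_deriv_binaryForm_fst _ _ _ _

lemma snd_mul_d22Phi :
    X.2 * d22Phi R mu (d + 1) X =
      binaryForm (fun j => ((d : ℝ) - j) * (((d : ℝ) + 1 - j) * coefa R mu (d + 1) j)) d
        X.1 X.2 := by
  simp only [d22Phi, d2Phi_eq]
  exact mul_deriv_binaryForm_snd _ _ _ _

end derivatives

theorem stmt9 (R mu : ℝ) (hR : 0 < R) (hmu : 0 < mu) (n : ℕ) (hn : 2 ≤ n)
    (X : ℝ × ℝ) :
    (hessPhi R mu n X * mobM R mu X) 0 1 = (hessPhi R mu n X * mobM R mu X) 1 0 := by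
  obtain ⟨d, rfl⟩ : ∃ d, n = d + 1 := ⟨n - 1, by omega⟩
  set c := coefa R mu (d + 1)
  have hcoeff : ∀ j ≤ d,
      R * (j * ((j + 1) * c (j + 1))) + mu * R * (((d : ℝ) - j) * ((j + 1) * c (j + 1))) =
        (1 + R) * (j * (((d : ℝ) + 1 - j) * c j)) +
          mu * R * (((d : ℝ) - j) * (((d : ℝ) + 1 - j) * c j)) := fun j hj => by
    have hrec := coefa_recursion hR hmu hn (k := j) (by omega)
    simp only [alph, Nat.cast_add, Nat.cast_one] at hrec
    linear_combination hrec
  simp only [hessPhi, mobM, mul_apply, Fin.sum_univ_two, of_apply, cons_val', cons_val_zero,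
    cons_val_one, empty_val', cons_val_fin_one]
  calc _ = R * (X.1 * d11Phi R mu (d + 1) X) + mu * R * (X.2 * d12Phi R mu (d + 1) X) := by ring
    _ = (1 + R) * (X.1 * d12Phi R mu (d + 1) X) + mu * R * (X.2 * d22Phi R mu (d + 1) X) := by
      rw [fst_mul_d11Phi, snd_mul_d12Phi, fst_mul_d12Phi, snd_mul_d22Phi,
        ← binaryForm_const_mul, ← binaryForm_const_mul, ← binaryForm_const_mul,
        ← binaryForm_const_mul, ← binaryForm_add, ← binaryForm_add]
      exact binaryForm_congr _ _ _ _ hcoeff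
    _ = _ := by ring
end
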